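/- Assume there exist finite positive Borel measures dA_{ij} (i,j ∈ {1,2}) on [0,1], with α_{ij}[w] := ∫₀¹ w(t) dA_{ij}(t) and 𝒦_{ij}(s) := ∫₀¹ k_i(t,s) dA_{ij}(t), such that for i,j = 1,2: α_{ij}[γ_{ij}] < 1; D_i := (1−α_{i1}[γ_{i1}])(1−α_{i2}[γ_{i2}]) − α_{i1}[γ_{i2}]α_{i2}[γ_{i1}] > 0; H_{ij}[u₁,u₂] ≤ α_{ij}[u_i] for every (u₁,u₂) ∈ K; and f_i(t,u₁,u₂) < N_i |u_i| for every t ∈ [0,1] and all u₁, u₂ ∈ ℝ with u_i ≠ 0, where 1/N_i := sup_{t∈[0,1]} { ∫₀¹ |k_i(t,s)| g_i(s) ds + (|γ_{i1}(t)|·(1−α_{i2}[γ_{i2}])/D_i + |γ_{i2}(t)|·α_{i2}[γ_{i1}]/D_i)·∫₀¹ 𝒦_{i1}(s) g_i(s) ds + (|γ_{i1}(t)|·α_{i1}[γ_{i2}]/D_i + |γ_{i2}(t)|·(1−α_{i1}[γ_{i1}])/D_i)·∫₀¹ 𝒦_{i2}(s) g_i(s) ds }. Then there is no nontrivial solution of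 the system in K: if (u,v) ∈ K and T(u,v) = (u,v), then (u,v) = (0,0). -/

import Mathlib

/-!
Fix a component `u = w_i` of a fixed point and suppose `‖u‖ > 0`. Since `0 ≤ H_{ij} ≤ α_{ij}` on
`K`, the functionals `α_{ij}` are nonnegative on the cone; the functions `t ↦ ∫ k_i(t,s) ψ(s) ds`
with `ψ ≥ 0` lie in the cone, so the kernels `𝒦_{ij} g_i` are nonnegative. Integrating the fixed
point equation against `dA_{ij}` (Fubini) turns `H_{ij}[u,v] ≤ α_{ij}[u]` into a 2×2 system of
inequalities for `H_{i1}, H_{i2}`, which Cramer's rule solves. At a maximum point of `|u|` this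
gives `‖u‖ ≤ ∫ ρ(s) f_i(s,u(s),v(s)) ds` with `ρ ≥ 0` and `∫ ρ ≤ 1/N_i`, while
`f_i(s,u(s),v(s)) < N_i ‖u‖` everywhere (where `u(s) = 0`, by continuity of `f_i`). Hence
`‖u‖ < ‖u‖`.
-/

open MeasureTheory Set

/-- Supremum norm of `u` on `[0,1]`. -/
noncomputable def nrm (u : ℝ → ℝ) : ℝ := sSup ((fun t => |u t|) '' Icc (0:ℝ) 1)

/-- Minimum (infimum) of `u` on `[a,b]`. -/
noncomputable def minOnIcc (u : ℝ → ℝ) (a b : ℝ) : ℝ := sInf (u '' Icc a b)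

/-- `i`-th component of the system operator `T`. -/
noncomputable def Tsys (k : Fin 2 → ℝ → ℝ → ℝ) (g : Fin 2 → ℝ → ℝ)
    (f : Fin 2 → ℝ → ℝ → ℝ → ℝ) (γ : Fin 2 → Fin 2 → ℝ → ℝ)
    (H : Fin 2 → Fin 2 → (ℝ → ℝ) → (ℝ → ℝ) → ℝ)
    (i : Fin 2) (u v : ℝ → ℝ) (t : ℝ) : ℝ :=
  γ i 0 t * H i 0 u v + γ i 1 t * H i 1 u v +
    ∫ s in (0:ℝ)..1, k i t s * g i s * f i s (u s) (v s)

/-- The hypotheses of the first non-existence theorem for index `i`. -/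
def NCond (k : Fin 2 → ℝ → ℝ → ℝ) (g : Fin 2 → ℝ → ℝ)
    (f : Fin 2 → ℝ → ℝ → ℝ → ℝ) (γ : Fin 2 → Fin 2 → ℝ → ℝ)
    (H : Fin 2 → Fin 2 → (ℝ → ℝ) → (ℝ → ℝ) → ℝ)
    (K : Set ((ℝ → ℝ) × (ℝ → ℝ))) (μ : Fin 2 → Fin 2 → Measure ℝ) (i : Fin 2) : Prop :=
  (∀ j : Fin 2, IsFiniteMeasure (μ i j) ∧ μ i j ((Icc (0:ℝ) 1)ᶜ) = 0) ∧
  (∀ j : Fin 2, (∫ t, γ i j t ∂(μ i j)) < 1) ∧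
  (0 < (1 - ∫ t, γ i 0 t ∂(μ i 0)) * (1 - ∫ t, γ i 1 t ∂(μ i 1)) -
    (∫ t, γ i 1 t ∂(μ i 0)) * (∫ t, γ i 0 t ∂(μ i 1))) ∧
  (∀ j, ∀ w ∈ K, H i j w.1 w.2 ≤ ∫ t, (if i = 0 then w.1 else w.2) t ∂(μ i j)) ∧
  (∀ t ∈ Icc (0:ℝ) 1, ∀ x y : ℝ, (if i = 0 then x else y) ≠ 0 →
    f i t x y <
      (let D := (1 - ∫ t', γ i 0 t' ∂(μ i 0)) * (1 - ∫ t', γ i 1 t' ∂(μ i 1)) -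
          (∫ t', γ i 1 t' ∂(μ i 0)) * (∫ t', γ i 0 t' ∂(μ i 1));
      (sSup ((fun t' => (∫ s in (0:ℝ)..1, |k i t' s| * g i s) +
        (|γ i 0 t'| * (1 - ∫ t'', γ i 1 t'' ∂(μ i 1)) / D +
          |γ i 1 t'| * (∫ t'', γ i 0 t'' ∂(μ i 1)) / D) *
          (∫ s in (0:ℝ)..1, (∫ t'', k i t'' s ∂(μ i 0)) * g i s) +
        (|γ i 0 t'| * (∫ t'', γ i 1 t'' ∂(μ i 0)) / D +
          |γ i 1 t'| * (1 - ∫ t'', γ i 0 t'' ∂(μ i 0)) / D) *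
          (∫ s in (0:ℝ)..1, (∫ t'', k i t'' s ∂(μ i 1)) * g i s)) '' Icc (0:ℝ) 1))⁻¹) *
      |(if i = 0 then x else y)|)

open Filter Function Topology

local notation "μI" => volume.restrict (Icc (0:ℝ) 1)

section SupNorm

variable {u : ℝ → ℝ}

lemma nrm_le {M : ℝ} (h : ∀ t ∈ Icc (0:ℝ) 1, |u t| ≤ M) : nrm u ≤ M :=
  csSup_le ((nonempty_Icc.2 zero_le_one).image _) (by rintro _ ⟨t, ht, rfl⟩; exact h t ht)

lemma abs_le_nrm (hu : ContinuousOn u (Icc 0 1)) {t : ℝ} (ht : t ∈ Icc (0:ℝ) 1) :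
    |u t| ≤ nrm u :=
  le_csSup (isCompact_Icc.image_of_continuousOn hu.abs).bddAbove ⟨t, ht, rfl⟩

lemma nrm_nonneg (hu : ContinuousOn u (Icc 0 1)) : 0 ≤ nrm u :=
  (abs_nonneg _).trans (abs_le_nrm hu (left_mem_Icc.2 zero_le_one))

lemma exists_abs_eq_nrm (hu : ContinuousOn u (Icc 0 1)) : ∃ t ∈ Icc (0:ℝ) 1, |u t| = nrm u :=
  (isCompact_Icc.image_of_continuousOn hu.abs).sSup_mem ((nonempty_Icc.2 zero_le_one).image _)

lemma le_minOnIcc {a b m : ℝ} (hab : a ≤ b) (h : ∀ t ∈ Icc a b, m ≤ u t) : m ≤ minOnIcc u a b :=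
  le_csInf ((nonempty_Icc.2 hab).image _) (by rintro _ ⟨t, ht, rfl⟩; exact h t ht)

end SupNorm

/-- The cone `K̃` of the paper. -/
def harnackCone (c a b : ℝ) : Set (ℝ → ℝ) :=
  {w | ContinuousOn w (Icc 0 1) ∧ c * nrm w ≤ minOnIcc w a b}

lemma mem_harnackCone_of_le {w : ℝ → ℝ} {a b c c' : ℝ} (hw : ContinuousOn w (Icc 0 1))
    (hab : a ≤ b) (hc : c ≤ c') (h : ∀ t ∈ Icc a b, c' * nrm w ≤ w t) :
    w ∈ harnackCone c a b :=
  ⟨hw, le_minOnIcc hab fun t ht =>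
    (mul_le_mul_of_nonneg_right hc (nrm_nonneg hw)).trans (h t ht)⟩

lemma integrable_of_continuousOn {μ : Measure ℝ} [IsFiniteMeasure μ]
    (hμ : ∀ᵐ t ∂μ, t ∈ Icc (0:ℝ) 1) {w : ℝ → ℝ} (hw : ContinuousOn w (Icc 0 1)) :
    Integrable w μ := by
  simpa only [IntegrableOn, Measure.restrict_eq_self_of_ae_mem hμ] using
    hw.integrableOn_compact (μ := μ) isCompact_Icc

lemma intervalIntegral_eq_integral_Icc (F : ℝ → ℝ) :
    ∫ s in (0:ℝ)..1, F s = ∫ s in Icc 0 1, F s := by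
  rw [intervalIntegral.integral_of_le zero_le_one, integral_Icc_eq_integral_Ioc]

lemma integral_mul_lt_mul_integral {α : Type*} [MeasurableSpace α] {μ : Measure α}
    {ρ φ : α → ℝ} {C : ℝ} (hρ0 : 0 ≤ᵐ[μ] ρ) (hρ : Integrable ρ μ)
    (hφ : AEStronglyMeasurable φ μ) (hφ0 : 0 ≤ᵐ[μ] φ) (hφC : ∀ᵐ x ∂μ, φ x < C)
    (hpos : 0 < ∫ x, ρ x * φ x ∂μ) : ∫ x, ρ x * φ x ∂μ < C * ∫ x, ρ x ∂μ := by
  have hρφ : Integrable (fun x => ρ x * φ x) μ := hρ.mul_bdd hφ <| by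
    filter_upwards [hφ0, hφC] with x h0 h
    rw [Real.norm_of_nonneg h0]
    exact h.le
  have hρφ0 : 0 ≤ᵐ[μ] fun x => ρ x * φ x := by
    filter_upwards [hρ0, hφ0] with x h1 h2 using mul_nonneg h1 h2
  rw [integral_pos_iff_support_of_nonneg_ae hρφ0 hρφ] at hpos
  rw [← integral_const_mul, ← sub_pos, ← integral_sub (hρ.const_mul C) hρφ,
    integral_pos_iff_support_of_nonneg_ae (f := fun x => C * ρ x - ρ x * φ x) _
      ((hρ.const_mul C).sub hρφ)]
  · refine hpos.trans_le (measure_mono_ae ?_)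
    filter_upwards [hρ0, hφC] with x (h0 : 0 ≤ ρ x) hC hx
    have hρx : 0 < ρ x := h0.lt_of_ne' (left_ne_zero_of_mul hx)
    exact ne_of_gt (by nlinarith [mul_pos hρx (sub_pos.2 hC)])
  · filter_upwards [hρ0, hφC] with x (h0 : 0 ≤ ρ x) hC
    show 0 ≤ C * ρ x - ρ x * φ x
    nlinarith [mul_nonneg h0 (sub_nonneg.2 hC.le)]

/-- The adjugate of `1 - A` has nonnegative entries when `A` has nonnegative off-diagonal entries
and diagonal entries below `1`, so it preserves the inequality `(1 - A) h ≤ B`. -/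
lemma det_mul_le_of_le_linear {a₀₀ a₀₁ a₁₀ a₁₁ h₀ h₁ B₀ B₁ : ℝ}
    (ha₀₁ : 0 ≤ a₀₁) (ha₁₀ : 0 ≤ a₁₀) (ha₀₀ : a₀₀ < 1) (ha₁₁ : a₁₁ < 1)
    (h₀_le : h₀ ≤ a₀₀ * h₀ + a₀₁ * h₁ + B₀) (h₁_le : h₁ ≤ a₁₀ * h₀ + a₁₁ * h₁ + B₁) :
    ((1 - a₀₀) * (1 - a₁₁) - a₀₁ * a₁₀) * h₀ ≤ (1 - a₁₁) * B₀ + a₀₁ * B₁ ∧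
    ((1 - a₀₀) * (1 - a₁₁) - a₀₁ * a₁₀) * h₁ ≤ a₁₀ * B₀ + (1 - a₀₀) * B₁ := by
  constructor
  · nlinarith [mul_le_mul_of_nonneg_left h₀_le (sub_nonneg.2 ha₁₁.le),
      mul_le_mul_of_nonneg_left h₁_le ha₀₁]
  · nlinarith [mul_le_mul_of_nonneg_left h₁_le (sub_nonneg.2 ha₀₀.le),
      mul_le_mul_of_nonneg_left h₀_le ha₁₀]

lemma integral_add_mul_add_mul {X Y Z : ℝ → ℝ} {μ : Measure ℝ} (hX : Integrable X μ)
    (hY : Integrable Y μ) (hZ : Integrable Z μ) (y z : ℝ) :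
    ∫ s, (X s + y * Y s + z * Z s) ∂μ = ∫ s, X s ∂μ + y * ∫ s, Y s ∂μ + z * ∫ s, Z s ∂μ := by
  rw [integral_add (f := fun s => X s + y * Y s) (hX.add (hY.const_mul y)) (hZ.const_mul z),
    integral_add hX (hY.const_mul y),
    integral_const_mul, integral_const_mul]

lemma aestronglyMeasurable_caratheodory {f : ℝ → ℝ → ℝ → ℝ} {μ : Measure ℝ}
    (hfm : ∀ x y, Measurable fun t => f t x y)
    (hfc : ∀ᵐ t ∂μ, Continuous fun p : ℝ × ℝ => f t p.1 p.2) {u v : ℝ → ℝ}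
    (hu : AEMeasurable u μ) (hv : AEMeasurable v μ) :
    AEStronglyMeasurable (fun t => f t (u t) (v t)) μ := by
  obtain ⟨S, hS, hSm, hSc⟩ := hfc.exists_measurable_mem
  have hF : Measurable (uncurry fun (p : ℝ × ℝ) t => S.indicator (fun t => f t p.1 p.2) t) := by
    refine measurable_uncurry_of_continuous_of_measurable (fun t => ?_)
      fun p => (hfm p.1 p.2).indicator hSm
    by_cases ht : t ∈ S
    · simpa only [indicator_of_mem ht] using hSc t ht
    · simpa only [indicator_of_notMem ht] using continuous_const
  refine (hF.comp_aemeasurable ((hu.prodMk hv).prodMk aemeasurable_id)).aestronglyMeasurable.congr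
    ?_
  filter_upwards [hS] with t ht
  simp only [comp_apply, uncurry_apply_pair, id, indicator_of_mem ht]

lemma le_of_forall_ne_of_continuous {f g : ℝ → ℝ} (hf : Continuous f) (hg : Continuous g)
    {z₀ : ℝ} (h : ∀ z ≠ z₀, f z ≤ g z) : f z₀ ≤ g z₀ :=
  le_on_closure (s := {z₀}ᶜ) h hf.continuousOn hg.continuousOn <| by
    rw [(dense_compl_singleton z₀).closure_eq]; trivial

lemma le_zero_or_lt_of_continuous {F : ℝ → ℝ → ℝ} (hF : Continuous fun p : ℝ × ℝ => F p.1 p.2)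
    {N : ℝ} (i : Fin 2)
    (h : ∀ x y, (if i = 0 then x else y) ≠ 0 → F x y < N * |if i = 0 then x else y|) (x y : ℝ) :
    F x y ≤ 0 ∨ F x y < N * |if i = 0 then x else y| := by
  by_cases hxy : (if i = 0 then x else y) = 0
  · left
    fin_cases i
    · simp only [Fin.zero_eta, Fin.isValue, if_true] at h hxy
      subst hxy
      simpa using le_of_forall_ne_of_continuous (hF.comp (continuous_id.prodMk continuous_const))
        (continuous_const.mul continuous_abs) fun z hz => (h z y hz).le
    · simp only [Fin.mk_one, Fin.isValue, one_ne_zero, if_false] at h hxy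
      subst hxy
      simpa using le_of_forall_ne_of_continuous (hF.comp (continuous_const.prodMk continuous_id))
        (continuous_const.mul continuous_abs) fun z hz => (h x z hz).le
  · exact Or.inr (h x y hxy)

lemma ite_mem_of_mem_prod {α : Type*} {A : Fin 2 → Set α} {p : α × α} (hp : p ∈ A 0 ×ˢ A 1)
    (i : Fin 2) : (if i = 0 then p.1 else p.2) ∈ A i := by
  fin_cases i
  exacts [hp.1, hp.2]

lemma exists_mem_prod_ite_eq {α : Type*} {A : Fin 2 → Set α} {p : α × α} (hp : p ∈ A 0 ×ˢ A 1)
    {i : Fin 2} {x : α} (hx : x ∈ A i) :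
    ∃ q ∈ A 0 ×ˢ A 1, (if i = 0 then q.1 else q.2) = x := by
  fin_cases i
  exacts [⟨(x, p.2), ⟨hx, hp.2⟩, rfl⟩, ⟨(p.1, x), ⟨hp.1, hx⟩, rfl⟩]

structure IsDominatedKernel (k : ℝ → ℝ → ℝ) (Φ : ℝ → ℝ) : Prop where
  measurable : Measurable (uncurry k)
  tendsto : ∀ τ ∈ Icc (0:ℝ) 1, ∀ᵐ s ∂μI,
    Tendsto (fun t => |k t s - k τ s|) (𝓝[Icc 0 1] τ) (𝓝 0)
  abs_le : ∀ t ∈ Icc (0:ℝ) 1, ∀ᵐ s ∂μI, |k t s| ≤ Φ s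

namespace IsDominatedKernel

variable {k : ℝ → ℝ → ℝ} {Φ ψ : ℝ → ℝ}

lemma measurable_apply (hk : IsDominatedKernel k Φ) (t : ℝ) : Measurable (k t) :=
  hk.measurable.comp measurable_prodMk_left

lemma ae_nonneg (hk : IsDominatedKernel k Φ) : 0 ≤ᵐ[μI] Φ :=
  (hk.abs_le 0 (left_mem_Icc.2 zero_le_one)).mono fun _ h => (abs_nonneg _).trans h

lemma norm_mul_le (hk : IsDominatedKernel k Φ) (hψ0 : 0 ≤ᵐ[μI] ψ) {t : ℝ} (ht : t ∈ Icc (0:ℝ) 1) :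
    ∀ᵐ s ∂μI, ‖k t s * ψ s‖ ≤ Φ s * ψ s := by
  filter_upwards [hk.abs_le t ht, hψ0] with s hks hs
  rw [Real.norm_eq_abs, abs_mul, abs_of_nonneg hs]
  exact mul_le_mul_of_nonneg_right hks hs

lemma integrable_mul (hk : IsDominatedKernel k Φ) (hψ : AEStronglyMeasurable ψ μI)
    (hψ0 : 0 ≤ᵐ[μI] ψ) (hΦψ : Integrable (fun s => Φ s * ψ s) μI) {t : ℝ} (ht : t ∈ Icc (0:ℝ) 1) :
    Integrable (fun s => k t s * ψ s) μI :=
  hΦψ.mono' ((hk.measurable_apply t).aestronglyMeasurable.mul hψ) (hk.norm_mul_le hψ0 ht)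

lemma continuousOn_integral_mul (hk : IsDominatedKernel k Φ) (hψ : AEStronglyMeasurable ψ μI)
    (hψ0 : 0 ≤ᵐ[μI] ψ) (hΦψ : Integrable (fun s => Φ s * ψ s) μI) :
    ContinuousOn (fun t => ∫ s in Icc 0 1, k t s * ψ s) (Icc 0 1) := by
  intro τ hτ
  refine continuousWithinAt_of_dominated
    (Eventually.of_forall fun t => (hk.measurable_apply t).aestronglyMeasurable.mul hψ)
    (eventually_mem_nhdsWithin.mono fun t ht => hk.norm_mul_le hψ0 ht) hΦψ ?_
  filter_upwards [hk.tendsto τ hτ] with s hs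
  refine (tendsto_iff_norm_sub_tendsto_zero.2 ?_).mul_const (ψ s)
  simpa only [Real.norm_eq_abs] using hs

lemma integrable_abs_mul (hk : IsDominatedKernel k Φ) (hψ : AEStronglyMeasurable ψ μI)
    (hψ0 : 0 ≤ᵐ[μI] ψ) (hΦψ : Integrable (fun s => Φ s * ψ s) μI) {t : ℝ}
    (ht : t ∈ Icc (0:ℝ) 1) : Integrable (fun s => |k t s| * ψ s) μI :=
  hΦψ.mono' ((hk.measurable_apply t).abs.aestronglyMeasurable.mul hψ) <| by
    filter_upwards [hk.norm_mul_le hψ0 ht] with s hs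
    rwa [Real.norm_eq_abs, abs_mul, abs_abs, ← abs_mul, ← Real.norm_eq_abs]

lemma abs_integral_mul_le (hψ0 : 0 ≤ᵐ[μI] ψ) (t : ℝ) :
    |∫ s in Icc 0 1, k t s * ψ s| ≤ ∫ s in Icc 0 1, |k t s| * ψ s :=
  abs_integral_le_integral_abs.trans_eq <| integral_congr_ae <| by
    filter_upwards [hψ0] with s hs
    rw [abs_mul, abs_of_nonneg hs]

section Fubini

variable (μ : Measure ℝ) [IsFiniteMeasure μ]

lemma integrable_prod_mul (hk : IsDominatedKernel k Φ) (hμ : ∀ᵐ t ∂μ, t ∈ Icc (0:ℝ) 1)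
    (hψ : AEStronglyMeasurable ψ μI) (hψ0 : 0 ≤ᵐ[μI] ψ)
    (hΦψ : Integrable (fun s => Φ s * ψ s) μI) :
    Integrable (uncurry fun t s => k t s * ψ s) (μ.prod μI) := by
  have hF : AEStronglyMeasurable (uncurry fun t s => k t s * ψ s) (μ.prod μI) :=
    hk.measurable.aestronglyMeasurable.mul hψ.comp_snd
  refine (integrable_prod_iff hF).2 ⟨?_, ?_⟩
  · filter_upwards [hμ] with t ht using hk.integrable_mul hψ hψ0 hΦψ ht
  · refine (integrable_const (∫ s in Icc 0 1, Φ s * ψ s)).mono'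
      hF.norm.integral_prod_right' ?_
    filter_upwards [hμ] with t ht
    rw [Real.norm_of_nonneg (integral_nonneg fun _ => norm_nonneg _)]
    exact integral_mono_ae (hk.integrable_mul hψ hψ0 hΦψ ht).norm hΦψ (hk.norm_mul_le hψ0 ht)

lemma integral_integral_mul_swap (hk : IsDominatedKernel k Φ) (hμ : ∀ᵐ t ∂μ, t ∈ Icc (0:ℝ) 1)
    (hψ : AEStronglyMeasurable ψ μI) (hψ0 : 0 ≤ᵐ[μI] ψ)
    (hΦψ : Integrable (fun s => Φ s * ψ s) μI) :
    ∫ t, (∫ s in Icc 0 1, k t s * ψ s) ∂μ = ∫ s in Icc 0 1, (∫ t, k t s ∂μ) * ψ s := by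
  simp_rw [integral_integral_swap (hk.integrable_prod_mul μ hμ hψ hψ0 hΦψ), integral_mul_const]

lemma integrable_integral_mul (hk : IsDominatedKernel k Φ) (hμ : ∀ᵐ t ∂μ, t ∈ Icc (0:ℝ) 1)
    (hψ : AEStronglyMeasurable ψ μI) (hψ0 : 0 ≤ᵐ[μI] ψ)
    (hΦψ : Integrable (fun s => Φ s * ψ s) μI) :
    Integrable (fun s => (∫ t, k t s ∂μ) * ψ s) μI := by
  simpa only [uncurry_apply_pair, integral_mul_const] using
    (hk.integrable_prod_mul μ hμ hψ hψ0 hΦψ).integral_prod_right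

lemma integrable_integral_mul_left (hk : IsDominatedKernel k Φ) (hμ : ∀ᵐ t ∂μ, t ∈ Icc (0:ℝ) 1)
    (hψ : AEStronglyMeasurable ψ μI) (hψ0 : 0 ≤ᵐ[μI] ψ)
    (hΦψ : Integrable (fun s => Φ s * ψ s) μI) :
    Integrable (fun t => ∫ s in Icc 0 1, k t s * ψ s) μ :=
  (hk.integrable_prod_mul μ hμ hψ hψ0 hΦψ).integral_prod_left

lemma integral_eq_of_fixed_point (hk : IsDominatedKernel k Φ) (hμ : ∀ᵐ t ∂μ, t ∈ Icc (0:ℝ) 1)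
    (hψ : AEStronglyMeasurable ψ μI) (hψ0 : 0 ≤ᵐ[μI] ψ)
    (hΦψ : Integrable (fun s => Φ s * ψ s) μI) {u γ₀ γ₁ : ℝ → ℝ} {h₀ h₁ : ℝ}
    (hγ₀ : ContinuousOn γ₀ (Icc 0 1)) (hγ₁ : ContinuousOn γ₁ (Icc 0 1))
    (hfix : ∀ t ∈ Icc (0:ℝ) 1, u t = γ₀ t * h₀ + γ₁ t * h₁ + ∫ s in Icc 0 1, k t s * ψ s) :
    ∫ t, u t ∂μ = (∫ t, γ₀ t ∂μ) * h₀ + (∫ t, γ₁ t ∂μ) * h₁ +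
      ∫ s in Icc 0 1, (∫ t, k t s ∂μ) * ψ s := by
  have hγ₀i := (integrable_of_continuousOn hμ hγ₀).mul_const h₀
  have hγ₁i := (integrable_of_continuousOn hμ hγ₁).mul_const h₁
  rw [integral_congr_ae (hμ.mono hfix), integral_add (f := fun t => γ₀ t * h₀ + γ₁ t * h₁)
    (hγ₀i.add hγ₁i) (hk.integrable_integral_mul_left μ hμ hψ hψ0 hΦψ), integral_add hγ₀i hγ₁i,
    integral_mul_const, integral_mul_const, hk.integral_integral_mul_swap μ hμ hψ hψ0 hΦψ]

end Fubini

variable {g : ℝ → ℝ} {a b c ct : ℝ}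

lemma integral_mul_mem_harnackCone (hk : IsDominatedKernel k Φ)
    (hlow : ∀ t ∈ Icc a b, ∀ᵐ s ∂μI, ct * Φ s ≤ k t s) (ha : 0 ≤ a) (hab : a ≤ b) (hb : b ≤ 1)
    (hc : 0 ≤ c) (hcct : c ≤ ct) (hψ : AEStronglyMeasurable ψ μI) (hψ0 : 0 ≤ᵐ[μI] ψ)
    (hΦψ : Integrable (fun s => Φ s * ψ s) μI) :
    (fun t => ∫ s in Icc 0 1, k t s * ψ s) ∈ harnackCone c a b := by
  have hM : 0 ≤ ∫ s in Icc 0 1, Φ s * ψ s := integral_nonneg_of_ae <| by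
    filter_upwards [hk.ae_nonneg, hψ0] with s h1 h2 using mul_nonneg h1 h2
  refine ⟨hk.continuousOn_integral_mul hψ hψ0 hΦψ, ?_⟩
  calc c * nrm _ ≤ c * ∫ s in Icc 0 1, Φ s * ψ s :=
        mul_le_mul_of_nonneg_left (nrm_le fun t ht => ?_) hc
    _ ≤ ct * ∫ s in Icc 0 1, Φ s * ψ s := mul_le_mul_of_nonneg_right hcct hM
    _ ≤ _ := le_minOnIcc hab fun t ht => ?_
  · simpa only [Real.norm_eq_abs] using norm_integral_le_of_norm_le hΦψ (hk.norm_mul_le hψ0 ht)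
  · rw [← integral_const_mul]
    refine integral_mono_ae (hΦψ.const_mul ct)
      (hk.integrable_mul hψ hψ0 hΦψ (Icc_subset_Icc ha hb ht)) ?_
    filter_upwards [hlow t ht, hψ0] with s h1 h2
    rw [← mul_assoc]
    exact mul_le_mul_of_nonneg_right h1 h2

/-- Tested against the functions `t ↦ ∫_E k(t,s) g(s) ds`, which lie in the cone, the measure
`μ` shows that `∫ k(t,s) dμ(t) · g(s)` is nonnegative on every measurable `E`. -/
lemma ae_nonneg_integral_mul (hk : IsDominatedKernel k Φ)
    (hlow : ∀ t ∈ Icc a b, ∀ᵐ s ∂μI, ct * Φ s ≤ k t s) (ha : 0 ≤ a) (hab : a ≤ b) (hb : b ≤ 1)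
    (hc : 0 ≤ c) (hcct : c ≤ ct) (hg : AEStronglyMeasurable g μI) (hg0 : 0 ≤ᵐ[μI] g)
    (hΦg : Integrable (fun s => Φ s * g s) μI) (μ : Measure ℝ) [IsFiniteMeasure μ]
    (hμ : ∀ᵐ t ∂μ, t ∈ Icc (0:ℝ) 1) (hα : ∀ w ∈ harnackCone c a b, 0 ≤ ∫ t, w t ∂μ) :
    0 ≤ᵐ[μI] fun s => (∫ t, k t s ∂μ) * g s := by
  refine ae_nonneg_of_forall_setIntegral_nonneg (hk.integrable_integral_mul μ hμ hg hg0 hΦg)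
    fun E hE _ => ?_
  have hgE : AEStronglyMeasurable (E.indicator g) μI := hg.indicator hE
  have hgE0 : 0 ≤ᵐ[μI] E.indicator g := hg0.mono fun s hs => indicator_nonneg (fun _ _ => hs) s
  have hΦgE : Integrable (fun s => Φ s * E.indicator g s) μI :=
    (hΦg.indicator hE).congr (Eventually.of_forall fun s => indicator_mul_right E Φ g)
  rw [← integral_indicator hE]
  simp_rw [indicator_mul_right, ← hk.integral_integral_mul_swap μ hμ hgE hgE0 hΦgE]
  exact hα _ (hk.integral_mul_mem_harnackCone hlow ha hab hb hc hcct hgE hgE0 hΦgE)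

end IsDominatedKernel

noncomputable def det2 (γ : Fin 2 → ℝ → ℝ) (μ : Fin 2 → Measure ℝ) : ℝ :=
  (1 - ∫ t, γ 0 t ∂(μ 0)) * (1 - ∫ t, γ 1 t ∂(μ 1)) - (∫ t, γ 1 t ∂(μ 0)) * (∫ t, γ 0 t ∂(μ 1))

noncomputable def cramerCoeff₀ (γ : Fin 2 → ℝ → ℝ) (μ : Fin 2 → Measure ℝ) (t : ℝ) : ℝ :=
  |γ 0 t| * (1 - ∫ t', γ 1 t' ∂(μ 1)) / det2 γ μ + |γ 1 t| * (∫ t', γ 0 t' ∂(μ 1)) / det2 γ μ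

noncomputable def cramerCoeff₁ (γ : Fin 2 → ℝ → ℝ) (μ : Fin 2 → Measure ℝ) (t : ℝ) : ℝ :=
  |γ 0 t| * (∫ t', γ 1 t' ∂(μ 0)) / det2 γ μ + |γ 1 t| * (1 - ∫ t', γ 0 t' ∂(μ 0)) / det2 γ μ

lemma cramerCoeff_nonneg {γ : Fin 2 → ℝ → ℝ} {μ : Fin 2 → Measure ℝ}
    (hα₀₁ : 0 ≤ ∫ t, γ 1 t ∂μ 0) (hα₁₀ : 0 ≤ ∫ t, γ 0 t ∂μ 1)
    (hγ1 : ∀ j, ∫ t, γ j t ∂μ j < 1) (hD : 0 < det2 γ μ) (t : ℝ) :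
    0 ≤ cramerCoeff₀ γ μ t ∧ 0 ≤ cramerCoeff₁ γ μ t := by
  have h₀ := sub_nonneg.2 (hγ1 0).le
  have h₁ := sub_nonneg.2 (hγ1 1).le
  exact ⟨add_nonneg (div_nonneg (mul_nonneg (abs_nonneg _) h₁) hD.le)
      (div_nonneg (mul_nonneg (abs_nonneg _) hα₁₀) hD.le),
    add_nonneg (div_nonneg (mul_nonneg (abs_nonneg _) hα₀₁) hD.le)
      (div_nonneg (mul_nonneg (abs_nonneg _) h₀) hD.le)⟩

/-- `1 / N_i` of the paper is the supremum of this function over `[0,1]`. -/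
noncomputable def growthBound (k : ℝ → ℝ → ℝ) (g : ℝ → ℝ) (γ : Fin 2 → ℝ → ℝ)
    (μ : Fin 2 → Measure ℝ) (t : ℝ) : ℝ :=
  (∫ s in (0:ℝ)..1, |k t s| * g s) +
    cramerCoeff₀ γ μ t * (∫ s in (0:ℝ)..1, (∫ t', k t' s ∂(μ 0)) * g s) +
    cramerCoeff₁ γ μ t * (∫ s in (0:ℝ)..1, (∫ t', k t' s ∂(μ 1)) * g s)

section FixedPoint

variable {k : ℝ → ℝ → ℝ} {g Φ u φ ψ : ℝ → ℝ} {γ : Fin 2 → ℝ → ℝ} {μ : Fin 2 → Measure ℝ}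
  [∀ j, IsFiniteMeasure (μ j)] {h : Fin 2 → ℝ} {a b c ct m C : ℝ}

lemma abs_le_of_fixed_point (hk : IsDominatedKernel k Φ) (hμ : ∀ j, ∀ᵐ t ∂μ j, t ∈ Icc (0:ℝ) 1)
    (hψ : AEStronglyMeasurable ψ μI) (hψ0 : 0 ≤ᵐ[μI] ψ)
    (hΦψ : Integrable (fun s => Φ s * ψ s) μI) (hγ : ∀ j, ContinuousOn (γ j) (Icc 0 1))
    (hα₀₁ : 0 ≤ ∫ t, γ 1 t ∂μ 0) (hα₁₀ : 0 ≤ ∫ t, γ 0 t ∂μ 1) (hγ1 : ∀ j, ∫ t, γ j t ∂μ j < 1)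
    (hD : 0 < det2 γ μ) (hh0 : ∀ j, 0 ≤ h j) (hhu : ∀ j, h j ≤ ∫ t, u t ∂μ j)
    (hfix : ∀ t ∈ Icc (0:ℝ) 1, u t = γ 0 t * h 0 + γ 1 t * h 1 + ∫ s in Icc 0 1, k t s * ψ s)
    {t : ℝ} (ht : t ∈ Icc (0:ℝ) 1) :
    |u t| ≤ (∫ s in Icc 0 1, |k t s| * ψ s) +
      cramerCoeff₀ γ μ t * (∫ s in Icc 0 1, (∫ t', k t' s ∂μ 0) * ψ s) +
      cramerCoeff₁ γ μ t * (∫ s in Icc 0 1, (∫ t', k t' s ∂μ 1) * ψ s) := by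
  set A : Fin 2 → ℝ := fun j => ∫ s in Icc 0 1, (∫ t', k t' s ∂μ j) * ψ s
  have hsub : ∀ j, h j ≤ (∫ t, γ 0 t ∂μ j) * h 0 + (∫ t, γ 1 t ∂μ j) * h 1 + A j := fun j =>
    (hhu j).trans_eq (hk.integral_eq_of_fixed_point (μ j) (hμ j) hψ hψ0 hΦψ (hγ 0) (hγ 1) hfix)
  obtain ⟨hDh₀, hDh₁⟩ := det_mul_le_of_le_linear hα₀₁ hα₁₀ (hγ1 0) (hγ1 1) (hsub 0) (hsub 1)
  have hh₀ : h 0 ≤ ((1 - ∫ t', γ 1 t' ∂(μ 1)) * A 0 + (∫ t', γ 1 t' ∂(μ 0)) * A 1) / det2 γ μ :=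
    (le_div_iff₀ hD).2 (by rw [mul_comm]; exact hDh₀)
  have hh₁ : h 1 ≤ ((∫ t', γ 0 t' ∂(μ 1)) * A 0 + (1 - ∫ t', γ 0 t' ∂(μ 0)) * A 1) / det2 γ μ :=
    (le_div_iff₀ hD).2 (by rw [mul_comm]; exact hDh₁)
  calc |u t| ≤ |γ 0 t| * h 0 + |γ 1 t| * h 1 + ∫ s in Icc 0 1, |k t s| * ψ s := by
        rw [hfix t ht]
        refine (abs_add_three _ _ _).trans (add_le_add (add_le_add ?_ ?_) ?_)
        · rw [abs_mul, abs_of_nonneg (hh0 0)]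
        · rw [abs_mul, abs_of_nonneg (hh0 1)]
        · exact IsDominatedKernel.abs_integral_mul_le hψ0 t
    _ ≤ |γ 0 t| * (((1 - ∫ t', γ 1 t' ∂(μ 1)) * A 0 + (∫ t', γ 1 t' ∂(μ 0)) * A 1) / det2 γ μ) +
        |γ 1 t| * (((∫ t', γ 0 t' ∂(μ 1)) * A 0 + (1 - ∫ t', γ 0 t' ∂(μ 0)) * A 1) / det2 γ μ) +
        ∫ s in Icc 0 1, |k t s| * ψ s := by gcongr
    _ = _ := by simp only [cramerCoeff₀, cramerCoeff₁, A]; ring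

/-- At a maximum point `t` of `|u|`, `‖u‖ ≤ ∫ ρ φ` for a nonnegative weight `ρ` with
`∫ ρ = growthBound t ≤ m`; since `φ < C`, this integral is either `≤ 0` or `< C m`. -/
theorem nrm_lt_of_fixed_point (hk : IsDominatedKernel k Φ)
    (hlow : ∀ t ∈ Icc a b, ∀ᵐ s ∂μI, ct * Φ s ≤ k t s) (ha : 0 ≤ a) (hab : a ≤ b) (hb : b ≤ 1)
    (hc : 0 ≤ c) (hcct : c ≤ ct) (hg : AEStronglyMeasurable g μI) (hg0 : 0 ≤ᵐ[μI] g)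
    (hΦg : Integrable (fun s => Φ s * g s) μI) (hμ : ∀ j, ∀ᵐ t ∂μ j, t ∈ Icc (0:ℝ) 1)
    (hα : ∀ j, ∀ w ∈ harnackCone c a b, 0 ≤ ∫ t, w t ∂μ j)
    (hγ : ∀ j, γ j ∈ harnackCone c a b) (hγ1 : ∀ j, ∫ t, γ j t ∂μ j < 1) (hD : 0 < det2 γ μ)
    (hu : ContinuousOn u (Icc 0 1)) (hh0 : ∀ j, 0 ≤ h j) (hhu : ∀ j, h j ≤ ∫ t, u t ∂μ j)
    (hφ : AEStronglyMeasurable φ μI) (hφ0 : 0 ≤ᵐ[μI] φ) (hC : 0 < C)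
    (hφC : ∀ᵐ s ∂μI, φ s < C) (hm : 0 < m) (hbound : ∀ t ∈ Icc (0:ℝ) 1, growthBound k g γ μ t ≤ m)
    (hfix : ∀ t ∈ Icc (0:ℝ) 1,
      u t = γ 0 t * h 0 + γ 1 t * h 1 + ∫ s in Icc 0 1, k t s * (g s * φ s)) :
    nrm u < C * m := by
  have hψ : AEStronglyMeasurable (fun s => g s * φ s) μI := hg.mul hφ
  have hψ0 : 0 ≤ᵐ[μI] fun s => g s * φ s := by
    filter_upwards [hg0, hφ0] with s h1 h2 using mul_nonneg h1 h2
  have hΦψ : Integrable (fun s => Φ s * (g s * φ s)) μI := by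
    simpa only [mul_assoc] using hΦg.mul_bdd hφ (c := C) <| by
      filter_upwards [hφ0, hφC] with s h0 h
      rw [Real.norm_of_nonneg h0]
      exact h.le
  obtain ⟨t, ht, hut⟩ := exists_abs_eq_nrm hu
  have hα₀₁ : 0 ≤ ∫ t, γ 1 t ∂μ 0 := hα 0 _ (hγ 1)
  have hα₁₀ : 0 ≤ ∫ t, γ 0 t ∂μ 1 := hα 1 _ (hγ 0)
  obtain ⟨he₀, he₁⟩ := cramerCoeff_nonneg hα₀₁ hα₁₀ hγ1 hD t
  set 𝒦 : Fin 2 → ℝ → ℝ := fun j s => ∫ t, k t s ∂μ j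
  have h𝒦g0 : ∀ j, 0 ≤ᵐ[μI] fun s => 𝒦 j s * g s := fun j =>
    hk.ae_nonneg_integral_mul hlow ha hab hb hc hcct hg hg0 hΦg (μ j) (hμ j) (hα j)
  have h𝒦g : ∀ j, Integrable (fun s => 𝒦 j s * g s) μI := fun j =>
    hk.integrable_integral_mul (μ j) (hμ j) hg hg0 hΦg
  set ρ : ℝ → ℝ := fun s =>
    |k t s| * g s + cramerCoeff₀ γ μ t * (𝒦 0 s * g s) + cramerCoeff₁ γ μ t * (𝒦 1 s * g s)
  have hρ0 : 0 ≤ᵐ[μI] ρ := by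
    filter_upwards [hg0, h𝒦g0 0, h𝒦g0 1] with s h1 h2 h3
    exact add_nonneg (add_nonneg (mul_nonneg (abs_nonneg _) h1) (mul_nonneg he₀ h2))
      (mul_nonneg he₁ h3)
  have hρ : Integrable ρ μI := ((hk.integrable_abs_mul hg hg0 hΦg ht).add
    ((h𝒦g 0).const_mul _)).add ((h𝒦g 1).const_mul _)
  have hρ_int : ∫ s in Icc 0 1, ρ s = growthBound k g γ μ t := by
    rw [integral_add_mul_add_mul (hk.integrable_abs_mul hg hg0 hΦg ht) (h𝒦g 0) (h𝒦g 1)]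
    simp only [growthBound, intervalIntegral_eq_integral_Icc, 𝒦]
  have hnrm : nrm u ≤ ∫ s in Icc 0 1, ρ s * φ s := by
    rw [← hut]
    refine (abs_le_of_fixed_point hk hμ hψ hψ0 hΦψ (fun j => (hγ j).1) hα₀₁ hα₁₀ hγ1 hD
      hh0 hhu hfix ht).trans_eq ?_
    rw [← integral_add_mul_add_mul (hk.integrable_abs_mul hψ hψ0 hΦψ ht)
      (hk.integrable_integral_mul (μ 0) (hμ 0) hψ hψ0 hΦψ)
      (hk.integrable_integral_mul (μ 1) (hμ 1) hψ hψ0 hΦψ)]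
    congr 1
    ext s
    simp only [ρ, 𝒦]
    ring
  rcases le_or_gt (∫ s in Icc 0 1, ρ s * φ s) 0 with hneg | hpos
  · exact (hnrm.trans hneg).trans_lt (mul_pos hC hm)
  calc nrm u ≤ ∫ s in Icc 0 1, ρ s * φ s := hnrm
    _ < C * ∫ s in Icc 0 1, ρ s := integral_mul_lt_mul_integral hρ0 hρ hφ hφ0 hφC hpos
    _ ≤ C * m := by rw [hρ_int]; exact mul_le_mul_of_nonneg_left (hbound t ht) hC.le

theorem eq_zero_of_fixed_point (hk : IsDominatedKernel k Φ)
    (hlow : ∀ t ∈ Icc a b, ∀ᵐ s ∂μI, ct * Φ s ≤ k t s) (ha : 0 ≤ a) (hab : a ≤ b) (hb : b ≤ 1)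
    (hc : 0 ≤ c) (hcct : c ≤ ct) (hg : AEStronglyMeasurable g μI) (hg0 : 0 ≤ᵐ[μI] g)
    (hΦg : Integrable (fun s => Φ s * g s) μI) (hμ : ∀ j, ∀ᵐ t ∂μ j, t ∈ Icc (0:ℝ) 1)
    (hα : ∀ j, ∀ w ∈ harnackCone c a b, 0 ≤ ∫ t, w t ∂μ j)
    (hγ : ∀ j, γ j ∈ harnackCone c a b) (hγ1 : ∀ j, ∫ t, γ j t ∂μ j < 1) (hD : 0 < det2 γ μ)
    (hu : ContinuousOn u (Icc 0 1)) (hh0 : ∀ j, 0 ≤ h j) (hhu : ∀ j, h j ≤ ∫ t, u t ∂μ j)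
    (hφ : AEStronglyMeasurable φ μI) (hφ0 : 0 ≤ᵐ[μI] φ)
    (hm : 0 < sSup (growthBound k g γ μ '' Icc 0 1))
    (hφu : ∀ᵐ s ∂μI, φ s ≤ 0 ∨ φ s < (sSup (growthBound k g γ μ '' Icc 0 1))⁻¹ * |u s|)
    (hfix : ∀ t ∈ Icc (0:ℝ) 1,
      u t = γ 0 t * h 0 + γ 1 t * h 1 + ∫ s in (0:ℝ)..1, k t s * g s * φ s) :
    ∀ t ∈ Icc (0:ℝ) 1, u t = 0 := by
  set m := sSup (growthBound k g γ μ '' Icc 0 1)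
  -- `sSup` of a set that is not bounded above is `0` in `ℝ`.
  have hbdd : BddAbove (growthBound k g γ μ '' Icc 0 1) := by
    by_contra hbdd
    exact hm.ne' (Real.sSup_of_not_bddAbove hbdd)
  by_contra! ⟨t, ht, hut⟩
  have hr : 0 < nrm u := (abs_pos.2 hut).trans_le (abs_le_nrm hu ht)
  have hφC : ∀ᵐ s ∂μI, φ s < m⁻¹ * nrm u := by
    filter_upwards [hφu, ae_restrict_mem measurableSet_Icc] with s hs hsI
    rcases hs with hs | hs
    · exact hs.trans_lt (by positivity)
    · exact hs.trans_le (mul_le_mul_of_nonneg_left (abs_le_nrm hu hsI) (by positivity))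
  have := nrm_lt_of_fixed_point hk hlow ha hab hb hc hcct hg hg0 hΦg hμ hα hγ hγ1 hD hu hh0 hhu
    hφ hφ0 (by positivity) hφC hm (fun t ht => le_csSup hbdd ⟨t, ht, rfl⟩) fun t ht => by
      simp only [hfix t ht, intervalIntegral_eq_integral_Icc, mul_assoc]
  rw [mul_right_comm, inv_mul_cancel₀ hm.ne', one_mul] at this
  exact this.false

end FixedPoint

namespace NCond

variable {k : Fin 2 → ℝ → ℝ → ℝ} {g : Fin 2 → ℝ → ℝ} {f : Fin 2 → ℝ → ℝ → ℝ → ℝ}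
  {γ : Fin 2 → Fin 2 → ℝ → ℝ} {H : Fin 2 → Fin 2 → (ℝ → ℝ) → (ℝ → ℝ) → ℝ}
  {K : Set ((ℝ → ℝ) × (ℝ → ℝ))} {μA : Fin 2 → Fin 2 → Measure ℝ} {i : Fin 2}

lemma sSup_growthBound_pos (hN : NCond k g f γ H K μA i) (hf : ∀ t x y, 0 ≤ f i t x y) :
    0 < sSup (growthBound (k i) (g i) (γ i) (μA i) '' Icc 0 1) := by
  have h1 := hN.2.2.2.2 0 (left_mem_Icc.2 zero_le_one) 1 1 (by fin_cases i <;> simp)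
  simp only [ite_self, abs_one, mul_one] at h1
  exact inv_pos.1 ((hf 0 1 1).trans_lt h1)

lemma integral_nonneg_of_mem (hN : NCond k g f γ H K μA i) {A : Fin 2 → Set (ℝ → ℝ)}
    (hK : K = A 0 ×ˢ A 1) (hH : ∀ j, ∀ w ∈ K, 0 ≤ H i j w.1 w.2) {w : (ℝ → ℝ) × (ℝ → ℝ)}
    (hw : w ∈ K) (j : Fin 2) {x : ℝ → ℝ} (hx : x ∈ A i) : 0 ≤ ∫ t, x t ∂μA i j := by
  subst hK
  obtain ⟨p, hp, rfl⟩ := exists_mem_prod_ite_eq hw hx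
  exact (hH j p hp).trans (hN.2.2.2.1 j p hp)

lemma ae_le_zero_or_lt (hN : NCond k g f γ H K μA i)
    (hf : ∀ᵐ t ∂μI, Continuous fun p : ℝ × ℝ => f i t p.1 p.2) (w : (ℝ → ℝ) × (ℝ → ℝ)) :
    ∀ᵐ s ∂μI, f i s (w.1 s) (w.2 s) ≤ 0 ∨ f i s (w.1 s) (w.2 s) <
      (sSup (growthBound (k i) (g i) (γ i) (μA i) '' Icc 0 1))⁻¹ *
        |(if i = 0 then w.1 else w.2) s| := by
  filter_upwards [hf, ae_restrict_mem measurableSet_Icc] with s hs hsI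
  rw [ite_apply]
  exact le_zero_or_lt_of_continuous hs i (hN.2.2.2.2 s hsI) _ _

end NCond

theorem stmt17_general
    (k : Fin 2 → ℝ → ℝ → ℝ) (g : Fin 2 → ℝ → ℝ) (f : Fin 2 → ℝ → ℝ → ℝ → ℝ)
    (γ : Fin 2 → Fin 2 → ℝ → ℝ) (H : Fin 2 → Fin 2 → (ℝ → ℝ) → (ℝ → ℝ) → ℝ)
    (a b : Fin 2 → ℝ) (Φ : Fin 2 → ℝ → ℝ) (ct : Fin 2 → ℝ) (cγ : Fin 2 → Fin 2 → ℝ)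
    (c : Fin 2 → ℝ) (K : Set ((ℝ → ℝ) × (ℝ → ℝ)))
    (hf_meas : ∀ i (x y : ℝ), Measurable (fun t => f i t x y))
    (hf_cont : ∀ i, ∀ᵐ t ∂(volume.restrict (Icc (0:ℝ) 1)),
      Continuous (fun p : ℝ × ℝ => f i t p.1 p.2))
    (hf_nonneg : ∀ i t x y, 0 ≤ f i t x y)
    (hk_meas : ∀ i, Measurable (Function.uncurry (k i)))
    (hk_cont : ∀ i, ∀ τ ∈ Icc (0:ℝ) 1, ∀ᵐ s ∂(volume.restrict (Icc (0:ℝ) 1)),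
      Filter.Tendsto (fun t => |k i t s - k i τ s|) (nhdsWithin τ (Icc (0:ℝ) 1)) (nhds 0))
    (hab : ∀ i, 0 ≤ a i ∧ a i ≤ b i ∧ b i ≤ 1)
    (hct : ∀ i, ct i ∈ Ioc (0:ℝ) 1)
    (hkΦ_abs : ∀ i, ∀ t ∈ Icc (0:ℝ) 1, ∀ᵐ s ∂(volume.restrict (Icc (0:ℝ) 1)),
      |k i t s| ≤ Φ i s)
    (hkΦ_low : ∀ i, ∀ t ∈ Icc (a i) (b i), ∀ᵐ s ∂(volume.restrict (Icc (0:ℝ) 1)),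
      ct i * Φ i s ≤ k i t s)
    (hg_meas : ∀ i, Measurable (g i))
    (hg_nonneg : ∀ i, ∀ᵐ s ∂(volume.restrict (Icc (0:ℝ) 1)), 0 ≤ g i s)
    (hgΦ_int : ∀ i, IntegrableOn (fun s => g i s * Φ i s) (Icc (0:ℝ) 1))
    (hγ_cont : ∀ i j, ContinuousOn (γ i j) (Icc (0:ℝ) 1))
    (hcγ : ∀ i j, cγ i j ∈ Ioc (0:ℝ) 1)
    (hγ_low : ∀ i j, ∀ t ∈ Icc (a i) (b i), cγ i j * nrm (γ i j) ≤ γ i j t)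
    (hc : ∀ i, c i = min (ct i) (min (cγ i 0) (cγ i 1)))
    (hK : K = {w : (ℝ → ℝ) × (ℝ → ℝ) |
      (ContinuousOn w.1 (Icc (0:ℝ) 1) ∧ c 0 * nrm w.1 ≤ minOnIcc w.1 (a 0) (b 0)) ∧
      (ContinuousOn w.2 (Icc (0:ℝ) 1) ∧ c 1 * nrm w.2 ≤ minOnIcc w.2 (a 1) (b 1))})
    (hH_nonneg : ∀ i j, ∀ w ∈ K, 0 ≤ H i j w.1 w.2)
    (μA : Fin 2 → Fin 2 → Measure ℝ)
    (hN : ∀ i, NCond k g f γ H K μA i) :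
    ∀ w ∈ K, (∀ t ∈ Icc (0:ℝ) 1, w.1 t = Tsys k g f γ H 0 w.1 w.2 t ∧
          w.2 t = Tsys k g f γ H 1 w.1 w.2 t) →
      ∀ t ∈ Icc (0:ℝ) 1, w.1 t = 0 ∧ w.2 t = 0 := by
  intro w hw hfix
  set A : Fin 2 → Set (ℝ → ℝ) := fun i => harnackCone (c i) (a i) (b i)
  have hK' : K = A 0 ×ˢ A 1 := hK
  have hw' : w ∈ A 0 ×ˢ A 1 := hK' ▸ hw
  suffices ∀ i : Fin 2, ∀ t ∈ Icc (0:ℝ) 1, (if i = 0 then w.1 else w.2) t = 0 from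
    fun t ht => ⟨this 0 t ht, this 1 t ht⟩
  intro i
  obtain ⟨hμ, hγ1, hD, hHα, -⟩ := hN i
  have : ∀ j, IsFiniteMeasure (μA i j) := fun j => (hμ j).1
  have hc0 : 0 ≤ c i := by
    rw [hc i]; exact le_min (hct i).1.le (le_min (hcγ i 0).1.le (hcγ i 1).1.le)
  have hcle : c i ≤ ct i ∧ c i ≤ cγ i 0 ∧ c i ≤ cγ i 1 := by simp [hc i]
  refine eq_zero_of_fixed_point ⟨hk_meas i, hk_cont i, hkΦ_abs i⟩ (hkΦ_low i) (hab i).1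
    (hab i).2.1 (hab i).2.2 hc0 hcle.1 (hg_meas i).aestronglyMeasurable (hg_nonneg i)
    (by simpa only [mul_comm] using (hgΦ_int i).integrable) (fun j => ae_iff.2 (hμ j).2)
    (fun j _ hx => (hN i).integral_nonneg_of_mem hK' (hH_nonneg i) hw j hx)
    (fun j => mem_harnackCone_of_le (hγ_cont i j) (hab i).2.1 ?_ (hγ_low i j)) hγ1 hD
    (ite_mem_of_mem_prod hw' i).1 (fun j => hH_nonneg i j w hw) (fun j => hHα j w hw)
    (aestronglyMeasurable_caratheodory (hf_meas i) (hf_cont i)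
      (hw'.1.1.aemeasurable measurableSet_Icc) (hw'.2.1.aemeasurable measurableSet_Icc))
    (ae_of_all _ fun s => hf_nonneg i s _ _) ((hN i).sSup_growthBound_pos (hf_nonneg i))
    ((hN i).ae_le_zero_or_lt (hf_cont i) w) fun t ht => ?_
  · fin_cases j
    exacts [hcle.2.1, hcle.2.2]
  · fin_cases i
    exacts [(hfix t ht).1, (hfix t ht).2]

theorem stmt17
    (k : Fin 2 → ℝ → ℝ → ℝ) (g : Fin 2 → ℝ → ℝ) (f : Fin 2 → ℝ → ℝ → ℝ → ℝ)
    (γ : Fin 2 → Fin 2 → ℝ → ℝ) (H : Fin 2 → Fin 2 → (ℝ → ℝ) → (ℝ → ℝ) → ℝ)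
    (a b : Fin 2 → ℝ) (Φ : Fin 2 → ℝ → ℝ) (ct : Fin 2 → ℝ) (cγ : Fin 2 → Fin 2 → ℝ)
    (c : Fin 2 → ℝ) (K : Set ((ℝ → ℝ) × (ℝ → ℝ)))
    (hf_meas : ∀ i (x y : ℝ), Measurable (fun t => f i t x y))
    (hf_cont : ∀ i, ∀ᵐ t ∂(volume.restrict (Icc (0:ℝ) 1)),
      Continuous (fun p : ℝ × ℝ => f i t p.1 p.2))
    (hf_nonneg : ∀ i t x y, 0 ≤ f i t x y)
    (hf_bdd : ∀ i, ∀ r > 0, ∃ C, ∀ᵐ t ∂(volume.restrict (Icc (0:ℝ) 1)),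
      ∀ x ∈ Icc (-r) r, ∀ y ∈ Icc (-r) r, f i t x y ≤ C)
    (hk_meas : ∀ i, Measurable (Function.uncurry (k i)))
    (hk_cont : ∀ i, ∀ τ ∈ Icc (0:ℝ) 1, ∀ᵐ s ∂(volume.restrict (Icc (0:ℝ) 1)),
      Filter.Tendsto (fun t => |k i t s - k i τ s|) (nhdsWithin τ (Icc (0:ℝ) 1)) (nhds 0))
    (hab : ∀ i, 0 ≤ a i ∧ a i ≤ b i ∧ b i ≤ 1)
    (hΦ_meas : ∀ i, Measurable (Φ i))
    (hΦ_bdd : ∀ i, ∃ C, ∀ᵐ s ∂(volume.restrict (Icc (0:ℝ) 1)), |Φ i s| ≤ C)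
    (hct : ∀ i, ct i ∈ Ioc (0:ℝ) 1)
    (hkΦ_abs : ∀ i, ∀ t ∈ Icc (0:ℝ) 1, ∀ᵐ s ∂(volume.restrict (Icc (0:ℝ) 1)),
      |k i t s| ≤ Φ i s)
    (hkΦ_low : ∀ i, ∀ t ∈ Icc (a i) (b i), ∀ᵐ s ∂(volume.restrict (Icc (0:ℝ) 1)),
      ct i * Φ i s ≤ k i t s)
    (hg_meas : ∀ i, Measurable (g i))
    (hg_nonneg : ∀ i, ∀ᵐ s ∂(volume.restrict (Icc (0:ℝ) 1)), 0 ≤ g i s)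
    (hgΦ_int : ∀ i, IntegrableOn (fun s => g i s * Φ i s) (Icc (0:ℝ) 1))
    (hΦg_pos : ∀ i, 0 < ∫ s in (a i)..(b i), Φ i s * g i s)
    (hγ_cont : ∀ i j, ContinuousOn (γ i j) (Icc (0:ℝ) 1))
    (hcγ : ∀ i j, cγ i j ∈ Ioc (0:ℝ) 1)
    (hγ_low : ∀ i j, ∀ t ∈ Icc (a i) (b i), cγ i j * nrm (γ i j) ≤ γ i j t)
    (hc : ∀ i, c i = min (ct i) (min (cγ i 0) (cγ i 1)))
    (hK : K = {w : (ℝ → ℝ) × (ℝ → ℝ) |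
      (ContinuousOn w.1 (Icc (0:ℝ) 1) ∧ c 0 * nrm w.1 ≤ minOnIcc w.1 (a 0) (b 0)) ∧
      (ContinuousOn w.2 (Icc (0:ℝ) 1) ∧ c 1 * nrm w.2 ≤ minOnIcc w.2 (a 1) (b 1))})
    (hH_nonneg : ∀ i j, ∀ w ∈ K, 0 ≤ H i j w.1 w.2)
    (hH_cont : ∀ i j, ∀ w ∈ K, ∀ ε > 0, ∃ δ > 0, ∀ w' ∈ K,
      max (nrm (fun t => w.1 t - w'.1 t)) (nrm (fun t => w.2 t - w'.2 t)) < δ →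
      |H i j w.1 w.2 - H i j w'.1 w'.2| < ε)
    (hH_bdd : ∀ i j, ∀ M : ℝ, ∃ M', ∀ w ∈ K, max (nrm w.1) (nrm w.2) ≤ M → H i j w.1 w.2 ≤ M')
    (μA : Fin 2 → Fin 2 → Measure ℝ)
    (hN : ∀ i, NCond k g f γ H K μA i) :
    ∀ w ∈ K, (∀ t ∈ Icc (0:ℝ) 1, w.1 t = Tsys k g f γ H 0 w.1 w.2 t ∧
          w.2 t = Tsys k g f γ H 1 w.1 w.2 t) →
      ∀ t ∈ Icc (0:ℝ) 1, w.1 t = 0 ∧ w.2 t = 0 :=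
  stmt17_general k g f γ H a b Φ ct cγ c K hf_meas hf_cont hf_nonneg hk_meas hk_cont hab hct hkΦ_abs
    hkΦ_low hg_meas hg_nonneg hgΦ_int hγ_cont hcγ hγ_low hc hK hH_nonneg μA hN
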